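/- arXiv:1106.6077 — 2 statements merged into one kernel-verified Lean document; each statement's English description precedes it below -/
import Mathlib

section
/- Let S be a good semigroup in ℤ₊^r. If n̲ ∈ ℤ₊^r is a gap of S (i.e. n̲ ∉ S), then there exists an index i ∈ {1,…,r} such that Δ_i^r(n̲) = ∅, where Δ_i^r(n̲) = {β̲ ∈ S : β_i = n_i, and β_d ≥ n_d for all d ≠ i}. -/
open Finset

/-- Δ_J(n) : elements of S agreeing with n on J and strictly larger off J. -/
def Delta {r : ℕ} (S : Set (Fin r → ℕ)) (J : Finset (Fin r)) (n : Fin r → ℕ) :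
    Set (Fin r → ℕ) :=
  {β | β ∈ S ∧ (∀ i ∈ J, β i = n i) ∧ ∀ t ∉ J, n t < β t}

/-- The pivotage property (S4). -/
def Pivotage {r : ℕ} (S : Set (Fin r → ℕ)) : Prop :=
  ∀ n ∈ S, ∀ m ∈ S, ∀ i₀ : Fin r, n i₀ = m i₀ →
    ∃ β ∈ S, (∀ k, min (n k) (m k) ≤ β k) ∧
      (∀ t, n t ≠ m t → β t = min (n t) (m t)) ∧ n i₀ < β i₀

/-- A good semigroup of ℤ₊^r. -/
def GoodSemigroup {r : ℕ} (S : Set (Fin r → ℕ)) : Prop :=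
  (0 : Fin r → ℕ) ∈ S ∧
  (∀ n ∈ S, ∀ m ∈ S, n + m ∈ S) ∧
  (∀ n ∈ S, ∀ m ∈ S, (fun i => min (n i) (m i)) ∈ S) ∧
  (∃ δ : Fin r → ℕ, ∀ n : Fin r → ℕ, (∀ i, δ i ≤ n i) → n ∈ S) ∧
  Pivotage S

/-- A maximal point of S. -/
def IsMaximalPoint {r : ℕ} (S : Set (Fin r → ℕ)) (n : Fin r → ℕ) : Prop :=
  n ∈ S ∧ ∀ i : Fin r, Delta S {i} n = ∅

/-- Dimension function of S. -/
def IsDimFun {r : ℕ} (S : Set (Fin r → ℕ)) (ℓ : (Fin r → ℕ) → ℕ) : Prop :=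
  ℓ 0 = 0 ∧
  ∀ (n : Fin r → ℕ) (i : Fin r),
    ((∃ β ∈ S, β i = n i ∧ ∀ j, j ≠ i → n j ≤ β j) →
       ℓ (n + Pi.single i 1) = ℓ n + 1) ∧
    ((¬ ∃ β ∈ S, β i = n i ∧ ∀ j, j ≠ i → n j ≤ β j) →
       ℓ (n + Pi.single i 1) = ℓ n)

/-- e_J, characteristic vector of J. -/
def eJ {r : ℕ} (J : Finset (Fin r)) : Fin r → ℕ := fun i => if i ∈ J then 1 else 0

/-- number of maximal points with all coordinates strictly below n. -/
noncomputable def mCount {r : ℕ} (S : Set (Fin r → ℕ)) (n : Fin r → ℕ) : ℕ :=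
  Set.ncard {γ | IsMaximalPoint S γ ∧ ∀ i, γ i < n i}

/-- A maximal point of kind x₂,…,x_{r−1}. -/
def OfKind {r : ℕ} (S : Set (Fin r → ℕ)) (n : Fin r → ℕ) (x : ℕ → ℕ) : Prop :=
  IsMaximalPoint S n ∧ ∀ j, 2 ≤ j → j ≤ r - 1 →
    ((x j = 0 ∧ ∀ J : Finset (Fin r), J ≠ univ → J.card = j → Delta S J n = ∅) ∨
     (x j = 1 ∧ ∀ J : Finset (Fin r), J ≠ univ → J.card = j → (Delta S J n).Nonempty))

/-- The Stöhr zeta coefficient ε_n. -/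
noncomputable def eps {r : ℕ} (q : ℕ) (ℓ : (Fin r → ℕ) → ℕ) (n : Fin r → ℕ) : ℚ :=
  ((q : ℚ) / ((q : ℚ) - 1)) * ∑ J : Finset (Fin r),
    (-1 : ℚ) ^ J.card * (q : ℚ) ^ ((∑ i, (n i : ℤ)) - (ℓ (n + eJ J) : ℤ))

/-- number of gaps of the i-th projection S_i below k. -/
noncomputable def gapsBelow {r : ℕ} (S : Set (Fin r → ℕ)) (i : Fin r) (k : ℕ) : ℕ :=
  Set.ncard {m | m < k ∧ m ∉ (fun β : Fin r → ℕ => β i) '' S}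

/- If every coordinate hyperplane through `n` met `S` in a point `≥ n`, say `β i` with
`(β i) i = n i`, then `n` would be the coordinatewise minimum of the `β i`; since a good
semigroup is closed under minima, `n` would lie in `S`. -/

theorem GoodSemigroup.inf_mem {r : ℕ} {S : Set (Fin r → ℕ)} (hS : GoodSemigroup S)
    {n m : Fin r → ℕ} (hn : n ∈ S) (hm : m ∈ S) : n ⊓ m ∈ S :=
  hS.2.2.1 n hn m hm

theorem GoodSemigroup.finset_inf'_mem {r : ℕ} {S : Set (Fin r → ℕ)} (hS : GoodSemigroup S)
    {ι : Type*} {s : Finset ι} (hs : s.Nonempty) {β : ι → Fin r → ℕ}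
    (hβ : ∀ i ∈ s, β i ∈ S) : s.inf' hs β ∈ S :=
  Finset.inf'_mem S (fun _ hn _ hm => hS.inf_mem hn hm) s hs β hβ

theorem univ_inf'_eq_of_le_of_apply_self {ι α : Type*} [Fintype ι] [Nonempty ι]
    [SemilatticeInf α] {n : ι → α} {β : ι → ι → α} (hle : ∀ i, n ≤ β i)
    (hself : ∀ i, β i i = n i) : univ.inf' univ_nonempty β = n := by
  funext k
  rw [Finset.inf'_apply]
  refine le_antisymm ?_ (Finset.le_inf' _ _ fun i _ => hle i k)
  exact (Finset.inf'_le _ (mem_univ k)).trans (hself k).le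

/-- If n is a gap of a good semigroup S, then Δ_i^r(n) = ∅ for some i, i.e. there is
no β ∈ S with β_i = n_i and β_d ≥ n_d for all d ≠ i. -/
theorem gap_exists_delta_r_empty {r : ℕ} (S : Set (Fin r → ℕ)) (hS : GoodSemigroup S)
    (n : Fin r → ℕ) (hn : n ∉ S) :
    ∃ i : Fin r, ¬ ∃ β ∈ S, β i = n i ∧ ∀ d, d ≠ i → n d ≤ β d := by
  by_contra! h
  choose β hβS hself hβge using h
  apply hn
  cases isEmpty_or_nonempty (Fin r) with
  | inl _ => exact Subsingleton.elim (0 : Fin r → ℕ) n ▸ hS.1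
  | inr _ =>
    have hle : ∀ i, n ≤ β i := fun i d => by
      rcases eq_or_ne d i with rfl | hdi
      · exact (hself d).ge
      · exact hβge i d hdi
    rw [← univ_inf'_eq_of_le_of_apply_self hle hself]
    exact hS.finset_inf'_mem univ_nonempty fun i _ => hβS i
end

section
/- Let S be a good semigroup in ℤ₊² (r = 2 branches) with dimension function ℓ, q ≥ 2, and ε_{(n₁,n₂)} = (q/(q−1))·Σ_{J⊆{1,2}} (−1)^{#J} q^{n₁+n₂−ℓ((n₁,n₂)+e_J)}. Let M be the set of maximal points of S, s_i(n_i) the number of gaps of S_i below n_i, and m(n₁,n₂) the number of maximal points with both coordinates strictly below (n₁,n₂). Then: if (n₁,n₂) ∈ M, ε_{(n₁,n₂)} = q^{s₁(n₁)+s₂(n₂)+m(n₁,n₂)}; if (n₁,n₂) ∈ S \ M, ε_{(n₁,n₂)} = q^{s₁(n₁)+s₂(n₂)+m(n₁,n₂)}·(q−1)/q. -/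
open Finset

/-!
Walk from `0` to `n`, first along the first axis and then vertically. The dimension function
grows by one at each step except at the gaps of `S₁` on the first leg and, on the second leg, at
the heights `b` at which every point of `S` in row `b` lies left of `n₁`. Such a height is either
a gap of `S₂` or, by pivotage, the height of exactly one maximal point below `n`; hence
`ℓ(n) = n₁ + n₂ - s₁(n₁) - s₂(n₂) - m(n)`. For `n ∈ S` each `ℓ(n + eᵢ)` is `ℓ(n) + 1`, while
`ℓ(n + e₁ + e₂)` is `ℓ(n) + 1` if `n` is maximal and `ℓ(n) + 2` otherwise, and the four-term sum
defining `ε_n` evaluates to `q^s` resp. `q^s (q - 1) / q`.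
-/

theorem IsDimFun.add_single_of_mem {r : ℕ} {S : Set (Fin r → ℕ)} {ℓ : (Fin r → ℕ) → ℕ}
    (hℓ : IsDimFun S ℓ) {n : Fin r → ℕ} (hn : n ∈ S) (i : Fin r) :
    ℓ (n + Pi.single i 1) = ℓ n + 1 :=
  (hℓ.2 n i).1 ⟨n, hn, rfl, fun _ _ => le_rfl⟩

theorem eJ_empty {r : ℕ} : eJ (∅ : Finset (Fin r)) = 0 := by
  funext i; simp [eJ]

theorem eJ_singleton {r : ℕ} (i : Fin r) : eJ {i} = Pi.single i 1 := by
  funext j; by_cases h : j = i <;> simp [eJ, h]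

theorem Nat.add_count_eq_of_succ {p : ℕ → Prop} [DecidablePred p] {f : ℕ → ℕ}
    (hpos : ∀ k, p k → f (k + 1) = f k) (hneg : ∀ k, ¬ p k → f (k + 1) = f k + 1) (k : ℕ) :
    f k + Nat.count p k = f 0 + k := by
  induction k with
  | zero => simp
  | succ k ih =>
    rw [Nat.count_succ]
    by_cases hk : p k
    · rw [hpos k hk, if_pos hk]; omega
    · rw [hneg k hk, if_neg hk]; omega

theorem ncard_setOf_lt_and_eq_count (p : ℕ → Prop) [DecidablePred p] (k : ℕ) :
    {m | m < k ∧ p m}.ncard = Nat.count p k := by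
  rw [Nat.count_eq_card_filter_range, ← Set.ncard_coe_finset]
  congr 1
  ext m
  simp

theorem gapsBelow_eq_count {r : ℕ} (S : Set (Fin r → ℕ)) (i : Fin r) (k : ℕ)
    [DecidablePred (· ∉ (fun β : Fin r → ℕ => β i) '' S)] :
    gapsBelow S i k = Nat.count (· ∉ (fun β : Fin r → ℕ => β i) '' S) k :=
  ncard_setOf_lt_and_eq_count _ k

section TwoBranches

variable {S : Set (Fin 2 → ℕ)}

theorem mem_Delta_zero {β γ : Fin 2 → ℕ} :
    β ∈ Delta S {0} γ ↔ β ∈ S ∧ β 0 = γ 0 ∧ γ 1 < β 1 := by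
  simp [Delta, Fin.forall_fin_two, -Set.sep_and]

theorem mem_Delta_one {β γ : Fin 2 → ℕ} :
    β ∈ Delta S {1} γ ↔ β ∈ S ∧ β 1 = γ 1 ∧ γ 0 < β 0 := by
  simp [Delta, Fin.forall_fin_two, -Set.sep_and]

theorem IsMaximalPoint.apply_zero_le {γ : Fin 2 → ℕ} (hγ : IsMaximalPoint S γ)
    {β : Fin 2 → ℕ} (hβ : β ∈ S) (h : β 1 = γ 1) : β 0 ≤ γ 0 := by
  by_contra! hlt
  exact (hγ.2 1).subset (mem_Delta_one.2 ⟨hβ, h, hlt⟩)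

theorem isMaximalPoint_iff (hS : Pivotage S) {γ : Fin 2 → ℕ} :
    IsMaximalPoint S γ ↔ γ ∈ S ∧ ∀ β ∈ S, β 1 = γ 1 → β 0 ≤ γ 0 := by
  refine ⟨fun hγ => ⟨hγ.1, fun β hβ h => hγ.apply_zero_le hβ h⟩, fun ⟨hγ, hle⟩ => ⟨hγ, ?_⟩⟩
  refine Fin.forall_fin_two.2 ⟨Set.eq_empty_of_forall_notMem fun β hβ => ?_,
    Set.eq_empty_of_forall_notMem fun β hβ => ?_⟩
  · obtain ⟨hβS, h0, h1⟩ := mem_Delta_zero.1 hβ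
    -- pivotage on γ and β (equal first coordinates) gives a point of γ's row right of γ
    obtain ⟨δ, hδS, -, hδmin, hδ0⟩ := hS γ hγ β hβS 0 h0.symm
    have hδ1 : δ 1 = γ 1 := by rw [hδmin 1 h1.ne, min_eq_left h1.le]
    exact (hle δ hδS hδ1).not_gt hδ0
  · obtain ⟨hβS, h1, h0⟩ := mem_Delta_one.1 hβ
    exact (hle β hβS h1).not_gt h0

theorem exists_isMaximalPoint (hS : Pivotage S) {a b : ℕ} (hne : ∃ β ∈ S, β 1 = b)
    (hlt : ∀ β ∈ S, β 1 = b → β 0 < a) :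
    ∃ γ, IsMaximalPoint S γ ∧ γ 1 = b ∧ γ 0 < a := by
  classical
  let P : ℕ → Prop := fun c => ∃ β ∈ S, β 1 = b ∧ β 0 = c
  obtain ⟨β, hβS, hβ1⟩ := hne
  obtain ⟨γ, hγS, hγ1, hγ0⟩ : P (Nat.findGreatest P a) :=
    Nat.findGreatest_spec (hlt β hβS hβ1).le ⟨β, hβS, hβ1, rfl⟩
  refine ⟨γ, (isMaximalPoint_iff hS).2 ⟨hγS, fun β' hβ'S hβ'1 => ?_⟩, hγ1, hlt γ hγS hγ1⟩
  rw [hγ1] at hβ'1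
  rw [hγ0]
  exact Nat.le_findGreatest (hlt β' hβ'S hβ'1).le ⟨β', hβ'S, hβ'1, rfl⟩

theorem injOn_apply_one_setOf_isMaximalPoint :
    Set.InjOn (fun γ : Fin 2 → ℕ => γ 1) {γ | IsMaximalPoint S γ} := by
  intro γ hγ γ' hγ' h
  have h0 : γ 0 = γ' 0 :=
    le_antisymm (hγ'.apply_zero_le hγ.1 h) (hγ.apply_zero_le hγ'.1 h.symm)
  funext i
  fin_cases i
  exacts [h0, h]

theorem ncard_setOf_row_lt_eq_gapsBelow_add_mCount (hS : Pivotage S) (n : Fin 2 → ℕ) :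
    {b | b < n 1 ∧ ∀ β ∈ S, β 1 = b → β 0 < n 0}.ncard = gapsBelow S 1 (n 1) + mCount S n := by
  set M := {γ | IsMaximalPoint S γ ∧ ∀ i, γ i < n i}
  set G := {b | b < n 1 ∧ b ∉ (fun β : Fin 2 → ℕ => β 1) '' S}
  have hG : G.Finite := (Set.finite_Iio (n 1)).subset fun b hb => hb.1
  have hM : ((fun γ : Fin 2 → ℕ => γ 1) '' M).Finite :=
    (Set.finite_Iio (n 1)).subset (by rintro _ ⟨γ, ⟨-, hγ⟩, rfl⟩; exact hγ 1)
  have hdisj : Disjoint G ((fun γ : Fin 2 → ℕ => γ 1) '' M) :=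
    Set.disjoint_left.2 fun _ hb ⟨γ, ⟨hγ, _⟩, hγb⟩ => hb.2 ⟨γ, hγ.1, hγb⟩
  have hsplit : {b | b < n 1 ∧ ∀ β ∈ S, β 1 = b → β 0 < n 0} =
      G ∪ (fun γ : Fin 2 → ℕ => γ 1) '' M := by
    ext b
    constructor
    · rintro ⟨hb, hlt⟩
      by_cases hbS : b ∈ (fun β : Fin 2 → ℕ => β 1) '' S
      · obtain ⟨γ, hγ, hγ1, hγ0⟩ := exists_isMaximalPoint hS hbS hlt
        exact Or.inr ⟨γ, ⟨hγ, Fin.forall_fin_two.2 ⟨hγ0, hγ1 ▸ hb⟩⟩, hγ1⟩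
      · exact Or.inl ⟨hb, hbS⟩
    · rintro (⟨hb, hbS⟩ | ⟨γ, ⟨hγ, hγn⟩, rfl⟩)
      · exact ⟨hb, fun β hβ hβb => absurd ⟨β, hβ, hβb⟩ hbS⟩
      · exact ⟨hγn 1, fun β hβ hβb => (hγ.apply_zero_le hβ hβb).trans_lt (hγn 0)⟩
  rw [hsplit, Set.ncard_union_eq hdisj hG hM,
    (injOn_apply_one_setOf_isMaximalPoint.mono fun _ hγ => hγ.1).ncard_image]
  rfl

theorem vecCons_add_single_zero (a b : ℕ) : ![a, b] + Pi.single 0 1 = ![a + 1, b] := by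
  funext i; fin_cases i <;> simp

theorem vecCons_add_single_one (a b : ℕ) : ![a, b] + Pi.single 1 1 = ![a, b + 1] := by
  funext i; fin_cases i <;> simp

variable {ℓ : (Fin 2 → ℕ) → ℕ}

theorem IsDimFun.apply_axis_add_gapsBelow (hℓ : IsDimFun S ℓ) (a : ℕ) :
    ℓ ![a, 0] + gapsBelow S 0 a = a := by
  classical
  have hstep (k : ℕ) := vecCons_add_single_zero k 0 ▸ hℓ.2 ![k, 0] 0
  have := Nat.add_count_eq_of_succ (f := fun k => ℓ ![k, 0])
    (p := (· ∉ (fun β : Fin 2 → ℕ => β 0) '' S))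
    (fun k hk => (hstep k).2 fun ⟨β, hβ, hβ0, _⟩ => hk ⟨β, hβ, hβ0⟩)
    (fun k hk => (hstep k).1 ?_) a
  · simpa [gapsBelow_eq_count, ← Matrix.zero_empty, hℓ.1] using this
  · obtain ⟨β, hβ, hβ0⟩ := not_not.1 hk
    exact ⟨β, hβ, hβ0, by simp [Fin.forall_fin_two]⟩

theorem IsDimFun.apply_add_count_row_lt (hℓ : IsDimFun S ℓ) (a b : ℕ)
    [DecidablePred fun c => ∀ β ∈ S, β 1 = c → β 0 < a] :
    ℓ ![a, b] + Nat.count (fun c => ∀ β ∈ S, β 1 = c → β 0 < a) b = ℓ ![a, 0] + b := by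
  have hstep (k : ℕ) := vecCons_add_single_one a k ▸ hℓ.2 ![a, k] 1
  refine Nat.add_count_eq_of_succ (f := fun k => ℓ ![a, k])
    (fun k hk => (hstep k).2 fun ⟨β, hβ, hβ1, hle⟩ => ?_)
    (fun k hk => (hstep k).1 ?_) b
  · exact (hk β hβ hβ1).not_ge (hle 0 (by decide))
  · push Not at hk
    obtain ⟨β, hβ, hβ1, hβ0⟩ := hk
    exact ⟨β, hβ, hβ1, by simpa [Fin.forall_fin_two] using hβ0⟩

theorem IsDimFun.apply_add_gapsBelow_add_mCount (hS : Pivotage S) (hℓ : IsDimFun S ℓ)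
    (n : Fin 2 → ℕ) :
    ℓ n + (gapsBelow S 0 (n 0) + gapsBelow S 1 (n 1) + mCount S n) = n 0 + n 1 := by
  classical
  have haxis := hℓ.apply_axis_add_gapsBelow (n 0)
  have hrows := hℓ.apply_add_count_row_lt (n 0) (n 1)
  rw [← ncard_setOf_lt_and_eq_count, ncard_setOf_row_lt_eq_gapsBelow_add_mCount hS,
    show ![n 0, n 1] = n from FinVec.etaExpand_eq n] at hrows
  omega

open Classical in
theorem IsDimFun.apply_add_single_add_single (hS : Pivotage S) (hℓ : IsDimFun S ℓ)
    {n : Fin 2 → ℕ} (hn : n ∈ S) :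
    ℓ (n + Pi.single 0 1 + Pi.single 1 1) = ℓ n + 1 + if IsMaximalPoint S n then 0 else 1 := by
  rw [← hℓ.add_single_of_mem hn 0]
  have hrow : (∃ β ∈ S, β 1 = (n + Pi.single 0 1 : Fin 2 → ℕ) 1 ∧
      ∀ j, j ≠ 1 → (n + Pi.single 0 1 : Fin 2 → ℕ) j ≤ β j) ↔ ¬ IsMaximalPoint S n := by
    simp [isMaximalPoint_iff hS, hn, Fin.forall_fin_two]
  split_ifs with hmax
  · exact (hℓ.2 _ 1).2 (hrow.not_left.2 hmax)
  · exact (hℓ.2 _ 1).1 (hrow.2 hmax)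

end TwoBranches

theorem eJ_univ_fin_two : eJ (univ : Finset (Fin 2)) = Pi.single 0 1 + Pi.single 1 1 := by
  funext i; fin_cases i <;> simp [eJ]

theorem eps_fin_two {q : ℕ} (hq : (q : ℚ) ≠ 0) {ℓ : (Fin 2 → ℕ) → ℕ} {n : Fin 2 → ℕ}
    {s d : ℕ} (hs : ℓ n + s = n 0 + n 1) (h0 : ℓ (n + Pi.single 0 1) = ℓ n + 1)
    (h1 : ℓ (n + Pi.single 1 1) = ℓ n + 1)
    (h01 : ℓ (n + Pi.single 0 1 + Pi.single 1 1) = ℓ n + 1 + d) :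
    eps q ℓ n = (q : ℚ) ^ s * ((q : ℚ) - 2 + ((q : ℚ) ^ d)⁻¹) / ((q : ℚ) - 1) := by
  have e0 : (n 0 : ℤ) + n 1 - ℓ n = s := by omega
  have e1 : (n 0 : ℤ) + n 1 - (ℓ n + 1 : ℕ) = s - 1 := by omega
  have e2 : (n 0 : ℤ) + n 1 - (ℓ n + 1 + d : ℕ) = s - 1 - d := by omega
  rw [eps, show (univ : Finset (Finset (Fin 2))) = {∅, {0}, {1}, univ} by decide]
  simp only [Finset.sum_insert (show ∅ ∉ ({{0}, {1}, univ} : Finset (Finset (Fin 2))) by decide),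
    Finset.sum_insert (show {0} ∉ ({{1}, univ} : Finset (Finset (Fin 2))) by decide),
    Finset.sum_insert (show {1} ∉ ({univ} : Finset (Finset (Fin 2))) by decide),
    Finset.sum_singleton, eJ_empty, eJ_singleton, eJ_univ_fin_two, ← add_assoc, add_zero,
    h0, h1, h01, Fin.sum_univ_two]
  rw [e0, e1, e2, zpow_sub₀ hq, zpow_sub₀ hq, zpow_sub₀ hq, zpow_natCast, zpow_natCast, zpow_one]
  simp only [Finset.card_empty, Finset.card_singleton, Finset.card_univ, Fintype.card_fin]
  field_simp
  ring

/-- The two-branch case: exact values of ε_{(n₁,n₂)}. -/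
theorem eps_two_branches (S : Set (Fin 2 → ℕ)) (hS : GoodSemigroup S)
    (ℓ : (Fin 2 → ℕ) → ℕ) (hℓ : IsDimFun S ℓ) (q : ℕ) (hq : 2 ≤ q)
    (n : Fin 2 → ℕ) (hn : n ∈ S) :
    (IsMaximalPoint S n →
      eps q ℓ n = (q : ℚ) ^ (gapsBelow S 0 (n 0) + gapsBelow S 1 (n 1) + mCount S n)) ∧
    (¬ IsMaximalPoint S n →
      eps q ℓ n = (q : ℚ) ^ (gapsBelow S 0 (n 0) + gapsBelow S 1 (n 1) + mCount S n) *
        (((q : ℚ) - 1) / (q : ℚ))) := by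
  have hq0 : (q : ℚ) ≠ 0 := by positivity
  have hq1 : (q : ℚ) - 1 ≠ 0 := sub_ne_zero.2 (by exact_mod_cast (by omega : q ≠ 1))
  have hpiv : Pivotage S := hS.2.2.2.2
  have key := eps_fin_two hq0 (hℓ.apply_add_gapsBelow_add_mCount hpiv n)
    (hℓ.add_single_of_mem hn 0) (hℓ.add_single_of_mem hn 1)
    (hℓ.apply_add_single_add_single hpiv hn)
  refine ⟨fun hmax => ?_, fun hmax => ?_⟩
  · rw [key, if_pos hmax]
    field_simp
    ring
  · rw [key, if_neg hmax]
    field_simp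
    ring
end
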